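/- arXiv:2502.19553 — 6 statements merged into one kernel-verified Lean document; each statement's English description precedes it below -/
import Mathlib

section
/- Let v̄ > 0, let G : [0, v̄] → [0,1] be an allocation (winning-probability) function and p : [0, v̄] → ℝ a payment function with p(0) = 0. Suppose the pair satisfies incentive compatibility: for all v, z ∈ [0, v̄], v·G(v) − p(v) ≥ v·G(z) − p(z). Then the payment is uniquely pinned down by the allocation: for every v ∈ [0, v̄], p(v) = v·G(v) − ∫₀^v G(θ) dθ. -/
/-- **Payoff Equivalence (analytic core).**
If `(G, p)` is an incentive-compatible direct mechanism on `[0, v̄]` with `p 0 = 0`,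
then payments are pinned down by the allocation rule:
`p v = v * G v - ∫₀^v G`. -/
theorem payment_eq_of_incentive_compatible
    (vbar : ℝ) (hvbar : 0 < vbar)
    (G p : ℝ → ℝ)
    (hG : ∀ v ∈ Set.Icc 0 vbar, G v ∈ Set.Icc (0 : ℝ) 1)
    (hp0 : p 0 = 0)
    (hIC : ∀ v ∈ Set.Icc 0 vbar, ∀ z ∈ Set.Icc 0 vbar,
      v * G z - p z ≤ v * G v - p v) :
    ∀ v ∈ Set.Icc 0 vbar, p v = v * G v - ∫ θ in (0 : ℝ)..v, G θ := by
  set U : ℝ → ℝ := fun x => x * G x - p x with hU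
  have hmono : ∀ z ∈ Set.Icc 0 vbar, ∀ w ∈ Set.Icc 0 vbar, z ≤ w → G z ≤ G w := by
    intro z hz w hw hzw
    rcases eq_or_lt_of_le hzw with rfl | hlt
    · exact le_refl _
    · nlinarith [hIC w hw z hz, hIC z hz w hw]
  have hsq : ∀ z ∈ Set.Icc 0 vbar, ∀ w ∈ Set.Icc 0 vbar, z ≤ w →
      (w - z) * G z ≤ U w - U z ∧ U w - U z ≤ (w - z) * G w := by
    intro z hz w hw hzw
    constructor
    · have := hIC w hw z hz; simp only [hU]; nlinarith
    · have := hIC z hz w hw; simp only [hU]; nlinarith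
  intro v hv
  obtain ⟨hv0, hvb⟩ := hv
  have hU0 : U 0 = 0 := by simp [hU, hp0]
  suffices h : U v = ∫ θ in (0:ℝ)..v, G θ by
    simp only [hU] at h; linarith
  have key : ∀ n : ℕ, 0 < n → |U v - ∫ θ in (0:ℝ)..v, G θ| ≤ v / n := by
    intro n hn
    set t : ℕ → ℝ := fun i => i * (v / n) with ht
    have hnpos : (0:ℝ) < n := Nat.cast_pos.mpr hn
    have hstep : 0 ≤ v / n := div_nonneg hv0 hnpos.le
    have htmono : ∀ i : ℕ, t i ≤ t (i+1) := by
      intro i; simp only [ht]; push_cast; nlinarith [Nat.cast_nonneg (α := ℝ) i]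
    have ht0 : t 0 = 0 := by simp [ht]
    have htn : t n = v := by
      simp only [ht]; field_simp
    have htmem : ∀ i ≤ n, t i ∈ Set.Icc 0 vbar := by
      intro i hi
      constructor
      · exact mul_nonneg (Nat.cast_nonneg i) hstep
      · have hin : (i : ℝ) ≤ n := Nat.cast_le.mpr hi
        have : t i ≤ t n := by
          simp only [ht]; exact mul_le_mul_of_nonneg_right hin hstep
        rw [htn] at this
        linarith
    -- integrability on each subinterval
    have hint : ∀ k < n, IntervalIntegrable G MeasureTheory.volume (t k) (t (k+1)) := by
      intro k hk
      have hmem1 := htmem k hk.le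
      have hmem2 := htmem (k+1) hk
      have hsub : Set.uIcc (t k) (t (k+1)) ⊆ Set.Icc 0 vbar := by
        rw [Set.uIcc_of_le (htmono k)]
        exact Set.Icc_subset_Icc hmem1.1 hmem2.2
      refine MonotoneOn.intervalIntegrable (fun x hx y hy hxy => ?_)
      exact hmono x (hsub hx) y (hsub hy) hxy
    -- integral bounds on each subinterval
    have hlow : ∀ k < n, (v / n) * G (t k) ≤ ∫ θ in (t k)..(t (k+1)), G θ := by
      intro k hk
      have hmem1 := htmem k hk.le
      have hmem2 := htmem (k+1) hk
      have hlen : t (k+1) - t k = v / n := by simp only [ht]; push_cast; ring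
      have := intervalIntegral.integral_mono_on (μ := MeasureTheory.volume)
        (f := fun _ => G (t k)) (g := G) (htmono k)
        (intervalIntegrable_const) (hint k hk)
        (fun x hx => hmono (t k) hmem1 x ⟨le_trans hmem1.1 hx.1, le_trans hx.2 hmem2.2⟩ hx.1)
      simpa [intervalIntegral.integral_const, smul_eq_mul, hlen] using this
    have hhigh : ∀ k < n, (∫ θ in (t k)..(t (k+1)), G θ) ≤ (v / n) * G (t (k+1)) := by
      intro k hk
      have hmem1 := htmem k hk.le
      have hmem2 := htmem (k+1) hk
      have hlen : t (k+1) - t k = v / n := by simp only [ht]; push_cast; ring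
      have := intervalIntegral.integral_mono_on (μ := MeasureTheory.volume)
        (f := G) (g := fun _ => G (t (k+1))) (htmono k)
        (hint k hk) (intervalIntegrable_const)
        (fun x hx => hmono x ⟨le_trans hmem1.1 hx.1, le_trans hx.2 hmem2.2⟩ (t (k+1)) hmem2 hx.2)
      simpa [intervalIntegral.integral_const, smul_eq_mul, hlen] using this
    -- the integral splits as sum of adjacent intervals
    have hsplit : ∑ k ∈ Finset.range n, ∫ θ in (t k)..(t (k+1)), G θ
        = ∫ θ in (0:ℝ)..v, G θ := by
      have := intervalIntegral.sum_integral_adjacent_intervals (a := t) (n := n) hint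
      rw [ht0, htn] at this
      exact this
    -- squeeze for U
    have hUlow : ∀ k < n, (v / n) * G (t k) ≤ U (t (k+1)) - U (t k) := by
      intro k hk
      have hlen : t (k+1) - t k = v / n := by simp only [ht]; push_cast; ring
      have := (hsq (t k) (htmem k hk.le) (t (k+1)) (htmem (k+1) hk) (htmono k)).1
      rw [hlen] at this; exact this
    have hUhigh : ∀ k < n, U (t (k+1)) - U (t k) ≤ (v / n) * G (t (k+1)) := by
      intro k hk
      have hlen : t (k+1) - t k = v / n := by simp only [ht]; push_cast; ring
      have := (hsq (t k) (htmem k hk.le) (t (k+1)) (htmem (k+1) hk) (htmono k)).2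
      rw [hlen] at this; exact this
    have hUtel : ∑ k ∈ Finset.range n, (U (t (k+1)) - U (t k)) = U v := by
      rw [Finset.sum_range_sub (fun i => U (t i)), ht0, htn, hU0, sub_zero]
    set L : ℝ := ∑ k ∈ Finset.range n, (v / n) * G (t k) with hL
    set M : ℝ := ∑ k ∈ Finset.range n, (v / n) * G (t (k+1)) with hM
    have hLU : L ≤ U v := by
      rw [← hUtel]; exact Finset.sum_le_sum (fun k hk => hUlow k (Finset.mem_range.mp hk))
    have hUM : U v ≤ M := by
      rw [← hUtel]; exact Finset.sum_le_sum (fun k hk => hUhigh k (Finset.mem_range.mp hk))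
    have hLI : L ≤ ∫ θ in (0:ℝ)..v, G θ := by
      rw [← hsplit]; exact Finset.sum_le_sum (fun k hk => hlow k (Finset.mem_range.mp hk))
    have hIM : (∫ θ in (0:ℝ)..v, G θ) ≤ M := by
      rw [← hsplit]; exact Finset.sum_le_sum (fun k hk => hhigh k (Finset.mem_range.mp hk))
    have hML : M - L ≤ v / n := by
      have : M - L = (v / n) * (G v - G 0) := by
        rw [hM, hL, ← Finset.sum_sub_distrib,
          Finset.sum_range_sub (fun i => (v / (n:ℝ)) * G (t i)) n, ht0, htn]
        ring
      rw [this]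
      have h1 : G v ≤ 1 := (hG v ⟨hv0, hvb⟩).2
      have h0 : 0 ≤ G 0 := (hG 0 ⟨le_refl _, hvbar.le⟩).1
      nlinarith
    rw [abs_le]
    refine ⟨?_, le_trans (sub_le_sub hUM hLI) hML⟩
    calc -(v / (n:ℝ)) ≤ -(M - L) := neg_le_neg hML
      _ = L - M := neg_sub M L
      _ ≤ U v - ∫ θ in (0:ℝ)..v, G θ := sub_le_sub hLU hIM
  -- conclude via ε-argument
  have habs : |U v - ∫ θ in (0:ℝ)..v, G θ| ≤ 0 := by
    refine le_of_forall_pos_le_add (fun ε hε => ?_)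
    obtain ⟨N, hN⟩ := exists_nat_gt (v / ε)
    have hN1 : (0:ℕ) < N + 1 := Nat.succ_pos N
    have hNpos : (0:ℝ) < (N:ℝ) + 1 := by positivity
    have hvN : v / ((N:ℕ)+1 : ℕ) < ε := by
      push_cast
      rw [div_lt_iff₀ hNpos]
      have : v / ε < (N:ℝ) + 1 := lt_of_lt_of_le hN (by linarith)
      calc v = (v / ε) * ε := by field_simp
        _ < ((N:ℝ) + 1) * ε := by
            exact mul_lt_mul_of_pos_right this hε
        _ = ε * ((N:ℝ) + 1) := by ring
    have := key (N+1) hN1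
    linarith
  have : U v - ∫ θ in (0:ℝ)..v, G θ = 0 := abs_nonpos_iff.mp habs
  linarith
end

section
/- Let v̄ > 0 and let F : [0, v̄] → ℝ be continuous and strictly increasing with F(0) = 0 (so F(v) > 0 for v > 0). Fix integers n ≥ 2 and 1 ≤ k ≤ n − 1. Define φ(v) := v − ∫₀^v [ Σ_{j=0}^{k−1} C(n−1, j) · (F(x)/F(v))^{n−1−j} · (1 − F(x)/F(v))^j ] dx for v ∈ (0, v̄]. Then φ is continuous and strictly increasing on (0, v̄], and φ(v) → 0 as v → 0⁺. -/
/-!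
A `[0, v]`-valued random variable `X` has mean `v - ∫₀^v P(X ≤ x) dx`. The `k`-th largest of `m`
draws from `F` truncated to `[0, v]` has CDF `x ↦ B (F x / F v)`, where
`B t = ∑_{j<k} C(m,j) t^(m-j) (1-t)^j` is the probability that fewer than `k` of `m` uniform draws
exceed `t`; so `φ` is such a mean. Raising `v` to `w` lowers the CDF on `[0, v]`, since `B` is
nondecreasing and `F x / F w ≤ F x / F v`, and adds the interval `[v, w]`, on which the CDF is
`< 1`: hence `φ` increases strictly. Continuity is that of a parametric integral, and
`0 ≤ φ v ≤ v` gives the limit at `0⁺`.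
-/

open Set Filter MeasureTheory

/-- The CDF at `t` of the `k`-th largest of `m` independent uniform draws from `[0, 1]`:
the `j`-th term is the probability that exactly `j` draws exceed `t`. -/
def kthLargestCDF (m k : ℕ) (t : ℝ) : ℝ :=
  ∑ j ∈ Finset.range k, (m.choose j : ℝ) * t ^ (m - j) * (1 - t) ^ j

section kthLargestCDF

variable {m k : ℕ} {t : ℝ}

lemma continuous_kthLargestCDF (m k : ℕ) : Continuous (kthLargestCDF m k) :=
  continuous_finsetSum _ fun _ _ => by fun_prop

lemma kthLargestCDF_nonneg (h0 : 0 ≤ t) (h1 : t ≤ 1) : 0 ≤ kthLargestCDF m k t :=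
  Finset.sum_nonneg fun j _ => by
    have : 0 ≤ 1 - t := by linarith
    positivity

lemma kthLargestCDF_succ_self (m : ℕ) (t : ℝ) : kthLargestCDF m (m + 1) t = 1 := by
  have h : kthLargestCDF m (m + 1) t = ((1 - t) + t) ^ m := by
    rw [add_pow, kthLargestCDF]
    exact Finset.sum_congr rfl fun j _ => by ring
  rw [h, sub_add_cancel, one_pow]

lemma kthLargestCDF_add_pow_le_one (hk : k ≤ m) (h0 : 0 ≤ t) (h1 : t ≤ 1) :
    kthLargestCDF m k t + (1 - t) ^ m ≤ 1 := by
  have hmono : kthLargestCDF m k t ≤ kthLargestCDF m m t :=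
    Finset.sum_le_sum_of_subset_of_nonneg (Finset.range_subset_range.2 hk) fun j _ _ => by
      have : 0 ≤ 1 - t := by linarith
      positivity
  have hlast : kthLargestCDF m (m + 1) t = kthLargestCDF m m t + (1 - t) ^ m := by
    simp only [kthLargestCDF, Finset.sum_range_succ, Nat.choose_self, Nat.sub_self, Nat.cast_one,
      pow_zero, one_mul, mul_one]
  linarith [kthLargestCDF_succ_self m t]

lemma kthLargestCDF_le_one (hk : k ≤ m) (h0 : 0 ≤ t) (h1 : t ≤ 1) : kthLargestCDF m k t ≤ 1 := by
  have : 0 ≤ (1 - t) ^ m := pow_nonneg (by linarith) m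
  linarith [kthLargestCDF_add_pow_le_one hk h0 h1]

lemma kthLargestCDF_lt_one (hk : k ≤ m) (h0 : 0 ≤ t) (h1 : t < 1) : kthLargestCDF m k t < 1 := by
  have : 0 < (1 - t) ^ m := pow_pos (by linarith) m
  linarith [kthLargestCDF_add_pow_le_one hk h0 h1.le]

/-- The derivative of the sum telescopes, by `C(m, j+1) (j+1) = C(m, j) (m-j)`. -/
lemma hasDerivAt_kthLargestCDF (m k : ℕ) (t : ℝ) :
    HasDerivAt (kthLargestCDF m k) ((m.choose k : ℝ) * k * t ^ (m - k) * (1 - t) ^ (k - 1)) t := by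
  set b : ℕ → ℝ := fun j => (m.choose j : ℝ) * j * t ^ (m - j) * (1 - t) ^ (j - 1) with hb
  have hbk : (m.choose k : ℝ) * k * t ^ (m - k) * (1 - t) ^ (k - 1) = b k - b 0 := by simp [hb]
  rw [hbk, ← Finset.sum_range_sub b k]
  refine HasDerivAt.fun_sum fun j _ => ?_
  have hpow : HasDerivAt (fun t : ℝ => t ^ (m - j)) (↑(m - j) * t ^ (m - j - 1)) t :=
    hasDerivAt_pow (m - j) t
  have hcompl : HasDerivAt (fun t : ℝ => (1 - t) ^ j) (↑j * (1 - t) ^ (j - 1) * (-1)) t :=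
    (hasDerivAt_pow j (1 - t)).comp t ((hasDerivAt_id t).const_sub 1)
  convert (hpow.mul hcompl).const_mul (m.choose j : ℝ) using 1
  · rfl
  · funext y; simp only [Pi.mul_apply]; ring
  · have hchoose : (m.choose (j + 1) : ℝ) * (j + 1) = (m.choose j : ℝ) * ((m - j : ℕ) : ℝ) := by
      exact_mod_cast Nat.choose_succ_right_eq m j
    simp only [hb, Nat.add_sub_cancel, ← Nat.sub_sub m j 1]
    push_cast at hchoose ⊢
    linear_combination (t ^ (m - j - 1) * (1 - t) ^ j) * hchoose

lemma monotoneOn_kthLargestCDF (m k : ℕ) : MonotoneOn (kthLargestCDF m k) (Icc 0 1) := by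
  refine monotoneOn_of_deriv_nonneg (convex_Icc 0 1) (continuous_kthLargestCDF m k).continuousOn
    (fun x _ => (hasDerivAt_kthLargestCDF m k x).differentiableAt.differentiableWithinAt)
    fun x hx => ?_
  rw [interior_Icc] at hx
  rw [(hasDerivAt_kthLargestCDF m k x).deriv]
  have h0 : 0 ≤ x := hx.1.le
  have h1 : 0 ≤ 1 - x := by linarith [hx.2]
  positivity

end kthLargestCDF

/-- By `E X = v - ∫₀^v P(X ≤ x) dx`, the mean of a `[0, v]`-valued variable `X` with CDF
`x ↦ H (F x / F v)`. -/
noncomputable def truncatedMean (H F : ℝ → ℝ) (v : ℝ) : ℝ :=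
  v - ∫ x in (0 : ℝ)..v, H (F x / F v)

section truncatedMean

variable {b v w : ℝ} {F H : ℝ → ℝ}

lemma nonneg_of_strictMonoOn_of_map_zero (hF : StrictMonoOn F (Icc 0 b)) (hF0 : F 0 = 0)
    {x : ℝ} (hx : x ∈ Icc 0 b) : 0 ≤ F x :=
  hF0 ▸ hF.monotoneOn (left_mem_Icc.2 (hx.1.trans hx.2)) hx hx.1

lemma pos_of_strictMonoOn_of_map_zero (hF : StrictMonoOn F (Icc 0 b)) (hF0 : F 0 = 0)
    (hv : v ∈ Ioc 0 b) : 0 < F v :=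
  hF0 ▸ hF (left_mem_Icc.2 (hv.1.le.trans hv.2)) (Ioc_subset_Icc_self hv) hv.1

lemma div_mem_Icc_of_strictMonoOn (hF : StrictMonoOn F (Icc 0 b)) (hF0 : F 0 = 0)
    (hv : v ∈ Ioc 0 b) {x : ℝ} (hx : x ∈ Icc 0 v) : F x / F v ∈ Icc 0 1 := by
  have hFv := pos_of_strictMonoOn_of_map_zero hF hF0 hv
  have hxb : x ∈ Icc 0 b := ⟨hx.1, hx.2.trans hv.2⟩
  exact ⟨div_nonneg (nonneg_of_strictMonoOn_of_map_zero hF hF0 hxb) hFv.le,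
    (div_le_one hFv).2 (hF.monotoneOn hxb (Ioc_subset_Icc_self hv) hx.2)⟩

lemma truncatedMean_mem_Icc (hH : ∀ t ∈ Icc (0 : ℝ) 1, H t ∈ Icc 0 1)
    (hF : StrictMonoOn F (Icc 0 b)) (hF0 : F 0 = 0) (hv : v ∈ Ioc 0 b) :
    truncatedMean H F v ∈ Icc 0 v := by
  have hHv : ∀ x ∈ Icc 0 v, H (F x / F v) ∈ Icc 0 1 := fun x hx =>
    hH _ (div_mem_Icc_of_strictMonoOn hF hF0 hv hx)
  have hlower : 0 ≤ ∫ x in (0 : ℝ)..v, H (F x / F v) :=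
    intervalIntegral.integral_nonneg hv.1.le fun x hx => (hHv x hx).1
  have hupper : ‖∫ x in (0 : ℝ)..v, H (F x / F v)‖ ≤ 1 * |v - 0| :=
    intervalIntegral.norm_integral_le_of_norm_le_const fun x hx => by
      rw [uIoc_of_le hv.1.le] at hx
      have := hHv x (Ioc_subset_Icc_self hx)
      rw [Real.norm_of_nonneg this.1]
      exact this.2
  rw [Real.norm_of_nonneg hlower, sub_zero, abs_of_pos hv.1, one_mul] at hupper
  exact ⟨by unfold truncatedMean; linarith, by unfold truncatedMean; linarith⟩

lemma tendsto_truncatedMean_nhdsGT_zero (hb : 0 < b) (hH : ∀ t ∈ Icc (0 : ℝ) 1, H t ∈ Icc 0 1)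
    (hF : StrictMonoOn F (Icc 0 b)) (hF0 : F 0 = 0) :
    Tendsto (truncatedMean H F) (nhdsWithin 0 (Ioi 0)) (nhds 0) := by
  have hIoc : ∀ᶠ v in nhdsWithin (0 : ℝ) (Ioi 0), truncatedMean H F v ∈ Icc 0 v := by
    filter_upwards [Ioo_mem_nhdsGT hb] with v hv
    exact truncatedMean_mem_Icc hH hF hF0 (Ioo_subset_Ioc_self hv)
  exact tendsto_of_tendsto_of_tendsto_of_le_of_le' tendsto_const_nhds
    (tendsto_id.mono_left nhdsWithin_le_nhds) (hIoc.mono fun _ h => h.1)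
    (hIoc.mono fun _ h => h.2)

lemma continuousOn_truncatedMean (hH : Continuous H) (hFc : ContinuousOn F (Icc 0 b))
    (hFv : ∀ v ∈ Ioc 0 b, F v ≠ 0) : ContinuousOn (truncatedMean H F) (Ioc 0 b) := by
  rcases lt_or_ge b 0 with hb | hb
  · rw [Ioc_eq_empty (by linarith)]
    exact continuousOn_empty _
  -- `G` extends `F` continuously to all of `ℝ`, as the parametric-integral lemma requires
  set G := IccExtend hb ((Icc 0 b).domRestrict F)
  have hG : Continuous G := (continuousOn_iff_continuous_domRestrict.1 hFc).Icc_extend'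
  have hFG : ∀ x ∈ Icc 0 b, G x = F x := fun x hx => IccExtend_of_mem _ _ hx
  have hint : ContinuousOn (fun v => ∫ x in (0 : ℝ)..v, H (G x / F v)) (Ioc 0 b) := by
    rw [continuousOn_iff_continuous_domRestrict]
    have hFr : Continuous fun v : Ioc 0 b => F v :=
      continuousOn_iff_continuous_domRestrict.1 (hFc.mono Ioc_subset_Icc_self)
    exact intervalIntegral.continuous_parametric_intervalIntegral_of_continuous
      (f := fun (v : Ioc 0 b) x => H (G x / F v))
      (hH.comp ((hG.comp continuous_snd).div (hFr.comp continuous_fst) fun p => hFv _ p.1.2))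
      continuous_subtype_val
  refine (continuousOn_id.sub hint).congr fun v hv => ?_
  refine congrArg (v - ·) (intervalIntegral.integral_congr fun x hx => ?_)
  rw [uIcc_of_le hv.1.le] at hx
  simp only [hFG x ⟨hx.1, hx.2.trans hv.2⟩]

lemma intervalIntegrable_comp_div (hH : Continuous H) (hFc : ContinuousOn F (Icc 0 b)) (w : ℝ)
    {a c : ℝ} (ha : 0 ≤ a) (hac : a ≤ c) (hc : c ≤ b) :
    IntervalIntegrable (fun x => H (F x / F w)) volume a c :=
  ((hH.comp_continuousOn (hFc.div_const _)).mono
    (by rw [uIcc_of_le hac]; exact Icc_subset_Icc ha hc)).intervalIntegrable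

lemma integral_comp_div_le_of_le (hH : Continuous H) (hHm : MonotoneOn H (Icc 0 1))
    (hFc : ContinuousOn F (Icc 0 b)) (hF : StrictMonoOn F (Icc 0 b)) (hF0 : F 0 = 0)
    (hv : v ∈ Ioc 0 b) (hw : w ∈ Ioc 0 b) (hvw : v ≤ w) :
    ∫ x in (0 : ℝ)..v, H (F x / F w) ≤ ∫ x in (0 : ℝ)..v, H (F x / F v) := by
  refine intervalIntegral.integral_mono_on hv.1.le
    (intervalIntegrable_comp_div hH hFc w le_rfl hv.1.le hv.2)
    (intervalIntegrable_comp_div hH hFc v le_rfl hv.1.le hv.2) fun x hx => ?_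
  have hxw : x ∈ Icc 0 w := ⟨hx.1, hx.2.trans hvw⟩
  refine hHm (div_mem_Icc_of_strictMonoOn hF hF0 hw hxw) (div_mem_Icc_of_strictMonoOn hF hF0 hv hx)
    (div_le_div_of_nonneg_left ?_ (pos_of_strictMonoOn_of_map_zero hF hF0 hv) ?_)
  · exact nonneg_of_strictMonoOn_of_map_zero hF hF0 ⟨hx.1, hx.2.trans hv.2⟩
  · exact hF.monotoneOn (Ioc_subset_Icc_self hv) (Ioc_subset_Icc_self hw) hvw

lemma integral_comp_div_lt_sub (hH : Continuous H) (hH1 : ∀ t ∈ Ico 0 1, H t < 1)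
    (hFc : ContinuousOn F (Icc 0 b)) (hF : StrictMonoOn F (Icc 0 b)) (hF0 : F 0 = 0)
    (hv : 0 ≤ v) (hw : w ∈ Ioc 0 b) (hvw : v < w) :
    ∫ x in v..w, H (F x / F w) < w - v := by
  have hint := intervalIntegrable_comp_div hH hFc w hv hvw.le hw.2
  have hpos : 0 < ∫ x in v..w, (1 - H (F x / F w)) := by
    refine intervalIntegral.intervalIntegral_pos_of_pos_on (intervalIntegrable_const.sub hint)
      (fun x hx => ?_) hvw
    have hFw := pos_of_strictMonoOn_of_map_zero hF hF0 hw
    have hxw : x ∈ Icc 0 w := ⟨hv.trans hx.1.le, hx.2.le⟩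
    have hlt : F x / F w < 1 :=
      (div_lt_one hFw).2 (hF ⟨hxw.1, hxw.2.trans hw.2⟩ (Ioc_subset_Icc_self hw) hx.2)
    linarith [hH1 _ ⟨(div_mem_Icc_of_strictMonoOn hF hF0 hw hxw).1, hlt⟩]
  rw [intervalIntegral.integral_sub intervalIntegrable_const hint,
    intervalIntegral.integral_const, smul_eq_mul, mul_one] at hpos
  linarith

lemma strictMonoOn_truncatedMean (hH : Continuous H) (hHm : MonotoneOn H (Icc 0 1))
    (hH1 : ∀ t ∈ Ico 0 1, H t < 1) (hFc : ContinuousOn F (Icc 0 b))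
    (hF : StrictMonoOn F (Icc 0 b)) (hF0 : F 0 = 0) :
    StrictMonoOn (truncatedMean H F) (Ioc 0 b) := by
  intro v hv w hw hvw
  have hsplit : (∫ x in (0 : ℝ)..v, H (F x / F w)) + ∫ x in v..w, H (F x / F w)
      = ∫ x in (0 : ℝ)..w, H (F x / F w) :=
    intervalIntegral.integral_add_adjacent_intervals
      (intervalIntegrable_comp_div hH hFc w le_rfl hv.1.le hv.2)
      (intervalIntegrable_comp_div hH hFc w hv.1.le hvw.le hw.2)
  have hlower := integral_comp_div_le_of_le hH hHm hFc hF hF0 hv hw hvw.le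
  have hnew := integral_comp_div_lt_sub hH hH1 hFc hF hF0 hv.1.le hw hvw
  unfold truncatedMean
  linarith

end truncatedMean

theorem tAE_continuous_strictMono_general
    (vbar : ℝ) (hvbar : 0 < vbar)
    (F : ℝ → ℝ)
    (hFcont : ContinuousOn F (Icc 0 vbar))
    (hFmono : StrictMonoOn F (Icc 0 vbar))
    (hF0 : F 0 = 0)
    (n k : ℕ) (hkn : k ≤ n - 1)
    (φ : ℝ → ℝ)
    (hφ : ∀ v, φ v = v - ∫ x in (0 : ℝ)..v,
      ∑ j ∈ Finset.range k,
        ((n - 1).choose j : ℝ) * (F x / F v) ^ (n - 1 - j) * (1 - F x / F v) ^ j) :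
    ContinuousOn φ (Ioc 0 vbar) ∧ StrictMonoOn φ (Ioc 0 vbar) ∧
      Tendsto φ (nhdsWithin 0 (Ioi 0)) (nhds 0) := by
  obtain rfl : φ = truncatedMean (kthLargestCDF (n - 1) k) F := funext hφ
  have hH : ∀ t ∈ Icc (0 : ℝ) 1, kthLargestCDF (n - 1) k t ∈ Icc 0 1 := fun t ht =>
    ⟨kthLargestCDF_nonneg ht.1 ht.2, kthLargestCDF_le_one hkn ht.1 ht.2⟩
  exact ⟨continuousOn_truncatedMean (continuous_kthLargestCDF _ _) hFcont
      fun v hv => (pos_of_strictMonoOn_of_map_zero hFmono hF0 hv).ne',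
    strictMonoOn_truncatedMean (continuous_kthLargestCDF _ _) (monotoneOn_kthLargestCDF _ _)
      (fun t ht => kthLargestCDF_lt_one hkn ht.1 ht.2) hFcont hFmono hF0,
    tendsto_truncatedMean_nhdsGT_zero hvbar hH hFmono hF0⟩

/-- **Continuity and strict monotonicity of the expected payment of the highest type**
(Lemma 2 of the paper). With `F` continuous and strictly increasing on `[0, v̄]`,
`F 0 = 0`, the function
`φ v = v - ∫₀^v ∑_{j=0}^{k-1} C(n-1,j) (F x / F v)^{n-1-j} (1 - F x / F v)^j dx`
is continuous and strictly increasing on `(0, v̄]` and tends to `0` as `v → 0⁺`. -/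
theorem tAE_continuous_strictMono
    (vbar : ℝ) (hvbar : 0 < vbar)
    (F : ℝ → ℝ)
    (hFcont : ContinuousOn F (Icc 0 vbar))
    (hFmono : StrictMonoOn F (Icc 0 vbar))
    (hF0 : F 0 = 0)
    (n k : ℕ) (hn : 2 ≤ n) (hk1 : 1 ≤ k) (hkn : k ≤ n - 1)
    (φ : ℝ → ℝ)
    (hφ : ∀ v, φ v = v - ∫ x in (0 : ℝ)..v,
      ∑ j ∈ Finset.range k,
        ((n - 1).choose j : ℝ) * (F x / F v) ^ (n - 1 - j) * (1 - F x / F v) ^ j) :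
    ContinuousOn φ (Ioc 0 vbar) ∧ StrictMonoOn φ (Ioc 0 vbar) ∧
      Tendsto φ (nhdsWithin 0 (Ioi 0)) (nhds 0) :=
  tAE_continuous_strictMono_general vbar hvbar F hFcont hFmono hF0 n k hkn φ hφ
end

section
/- Let v̄ > 0, let n ≥ 2 and 1 ≤ k < n, and let F be an atomless probability distribution with full support on [0, v̄]. For v ∈ (0, v̄] and κ ∈ {1, …, k}, let e_κ(v) denote the expected value of the κ-th largest of (n − k + κ − 1) i.i.d. draws from F conditioned on [0, v] (the truncation of F to [0, v]). Let μ, μ′ be probability mass functions on {1, …, k} such that μ strictly first-order stochastically dominates μ′ (Σ_{i ≥ j} μ(i) ≥ Σ_{i ≥ j} μ′(i) for all j, strictly for some j). Then Σ_{κ=1}^k μ′(κ)·e_κ(v) > Σ_{κ=1}^k μ(κ)·e_κ(v). -/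
/-!
`e_κ(v)` is the expectation of the `(n - k)`-th smallest of `n - k + κ - 1` draws, so raising `κ`
by one adds one draw to the same order statistic. An extra draw can only lower it, and lowers it
strictly when the draws are strictly increasing (the extra one being the smallest); full support
gives that event positive probability. So `κ ↦ e_κ(v)` is strictly decreasing, and Abel summation
writes `∑ w(κ) e_κ(v)` as `e_1(v)` plus the tail sums of `w` weighted by the negative gaps
`e_{j+1}(v) - e_j(v)`; strict dominance of the tail sums gives the strict inequality.
-/

open MeasureTheory

/-- The `k`-th largest entry (1-indexed) of the tuple `y : Fin n → ℝ`:
sort `y` in increasing order and take the entry at position `n - k`. -/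
noncomputable def kthLargest (n k : ℕ) (y : Fin n → ℝ) : ℝ :=
  if h : n - k < n then y (Tuple.sort y ⟨n - k, h⟩) else 0

/-- Expected value of the `κ`-th largest of `m` i.i.d. draws from the truncation of
`μ` to `[0, v]` (i.e. `μ` conditioned on `[0, v]`). -/
noncomputable def truncExpOrderStat (μ : Measure ℝ) (m κ : ℕ) (v : ℝ) : ℝ :=
  ∫ y, kthLargest m κ y
    ∂(Measure.pi fun _ : Fin m => ProbabilityTheory.cond μ (Set.Icc 0 v))

open Finset ProbabilityTheory

theorem Finset.card_filter_univ_comp_perm {n : ℕ} (p : Fin n → Prop) [DecidablePred p]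
    (σ : Equiv.Perm (Fin n)) : #{i | p (σ i)} = #{i | p i} := by
  rw [← card_map σ.toEmbedding]
  congr 1
  ext i
  simp

theorem kthLargest_le_iff {n k : ℕ} (h : n - k < n) (y : Fin n → ℝ) (a : ℝ) :
    kthLargest n k y ≤ a ↔ n - k < #{i | y i ≤ a} := by
  have hsorted := Tuple.lt_card_le_iff_apply_le_of_monotone (j := ⟨n - k, h⟩) (a := a)
    (Tuple.monotone_sort y)
  simp only [Function.comp_apply, card_filter_univ_comp_perm (fun i => y i ≤ a)] at hsorted
  rw [kthLargest, dif_pos h, ← hsorted]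

theorem kthLargest_eq_of_monotone {n k : ℕ} (h : n - k < n) {y : Fin n → ℝ} (hy : Monotone y) :
    kthLargest n k y = y ⟨n - k, h⟩ := by
  rw [kthLargest, dif_pos h, Tuple.sort_eq_refl_iff_monotone.mpr hy, Equiv.refl_apply]

theorem kthLargest_mem_Icc {n k : ℕ} {y : Fin n → ℝ} {v : ℝ} (hv : 0 ≤ v)
    (hy : ∀ i, y i ∈ Set.Icc 0 v) : kthLargest n k y ∈ Set.Icc 0 v := by
  unfold kthLargest
  split_ifs
  exacts [hy _, ⟨le_rfl, hv⟩]

theorem measurable_card_filter_le {n : ℕ} (a : ℝ) :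
    Measurable fun y : Fin n → ℝ => #{i | y i ≤ a} := by
  simp only [card_filter]
  exact measurable_sum _ fun i _ => Measurable.ite
    (measurableSet_le (measurable_pi_apply i) measurable_const) measurable_const measurable_const

theorem measurable_kthLargest (n k : ℕ) : Measurable (kthLargest n k) := by
  by_cases h : n - k < n
  · refine measurable_of_Iic fun a => ?_
    have hpre : kthLargest n k ⁻¹' Set.Iic a = {y | n - k < #{i | y i ≤ a}} :=
      Set.ext fun y => kthLargest_le_iff h y a
    rw [hpre]
    exact measurable_card_filter_le a MeasurableSet.of_discrete
  · have hzero : kthLargest n k = fun _ => 0 := funext fun y => dif_neg h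
    rw [hzero]
    exact measurable_const

theorem kthLargest_succ_le_tail {m κ : ℕ} (hκ : 0 < κ) (hκm : κ ≤ m) (y : Fin (m + 1) → ℝ) :
    kthLargest (m + 1) (κ + 1) y ≤ kthLargest m κ (Fin.tail y) := by
  have hcount := (kthLargest_le_iff (k := κ) (by omega) (Fin.tail y) _).mp le_rfl
  rw [kthLargest_le_iff (by omega), Fin.card_filter_univ_succ',
    show m + 1 - (κ + 1) = m - κ by omega]
  exact hcount.trans_le (Nat.le_add_left _ _)

theorem kthLargest_succ_lt_tail {m κ : ℕ} (hκ : 0 < κ) (hκm : κ ≤ m) {y : Fin (m + 1) → ℝ}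
    (hy : StrictMono y) : kthLargest (m + 1) (κ + 1) y < kthLargest m κ (Fin.tail y) := by
  rw [kthLargest_eq_of_monotone (by omega) hy.monotone,
    kthLargest_eq_of_monotone (y := Fin.tail y) (by omega) (hy.comp Fin.strictMono_succ).monotone]
  exact hy (by rw [Fin.lt_def]; simp only [Fin.val_succ]; omega)

theorem measurePreserving_finTail {α : Type*} [MeasurableSpace α] (ν : Measure α)
    [IsProbabilityMeasure ν] (m : ℕ) :
    MeasurePreserving (Fin.tail : (Fin (m + 1) → α) → Fin m → α)
      (Measure.pi fun _ => ν) (Measure.pi fun _ => ν) := by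
  convert (measurePreserving_snd (ν := Measure.pi fun _ : Fin m => ν)).comp
    (measurePreserving_piFinSuccAbove (fun _ => ν) 0)
  ext y i
  simp [MeasurableEquiv.piFinSuccAbove, Fin.tail]

theorem MeasureTheory.integral_lt_integral_of_le_of_lt_on {α : Type*} [MeasurableSpace α]
    {μ : Measure α} {f g : α → ℝ} (hf : Integrable f μ) (hg : Integrable g μ)
    (hle : ∀ x, f x ≤ g x) {s : Set α} (hs : μ s ≠ 0) (hlt : ∀ x ∈ s, f x < g x) :
    ∫ x, f x ∂μ < ∫ x, g x ∂μ := by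
  rw [← sub_pos, ← integral_sub hg hf,
    integral_pos_iff_support_of_nonneg (fun x => sub_nonneg.mpr (hle x)) (hg.sub hf)]
  refine (pos_iff_ne_zero.mpr hs).trans_le (measure_mono fun x hx => ?_)
  exact (sub_pos.mpr (hlt x hx)).ne'

theorem pi_setOf_strictMono_pos {ν : Measure ℝ} [SigmaFinite ν] {v : ℝ} (hv : 0 < v)
    (hν : ∀ a b, 0 ≤ a → a < b → b ≤ v → 0 < ν (Set.Ioo a b)) (n : ℕ) :
    0 < Measure.pi (fun _ : Fin n => ν) {y | StrictMono y} := by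
  set J : Fin n → Set ℝ := fun i => Set.Ioo (i * v / n) ((i + 1) * v / n)
  have hbox : Set.univ.pi J ⊆ {y | StrictMono y} := by
    intro y hy i j hij
    have hn : (0 : ℝ) < n := by exact_mod_cast i.pos
    have hij' : (i : ℝ) + 1 ≤ j := by exact_mod_cast hij
    calc y i < (i + 1) * v / n := (hy i trivial).2
      _ ≤ j * v / n := by gcongr
      _ < y j := (hy j trivial).1
  refine lt_of_lt_of_le ?_ (measure_mono hbox)
  rw [Measure.pi_pi, pos_iff_ne_zero, prod_ne_zero_iff]
  intro i _
  have hn : (0 : ℝ) < n := by exact_mod_cast i.pos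
  refine (hν _ _ (by positivity) (by gcongr; linarith) ?_).ne'
  rw [div_le_iff₀ hn, mul_comm v]
  gcongr
  exact_mod_cast i.isLt

theorem integrable_kthLargest_pi {ν : Measure ℝ} [IsProbabilityMeasure ν] {v : ℝ} (hv : 0 ≤ v)
    (hν : ∀ᵐ x ∂ν, x ∈ Set.Icc 0 v) (n k : ℕ) :
    Integrable (kthLargest n k) (Measure.pi fun _ : Fin n => ν) := by
  have hbox : ∀ᵐ y ∂(Measure.pi fun _ : Fin n => ν), ∀ i, y i ∈ Set.Icc 0 v :=
    ae_all_iff.mpr fun _ => Measure.tendsto_eval_ae_ae.eventually hν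
  refine Integrable.of_mem_Icc 0 v (measurable_kthLargest n k).aemeasurable ?_
  filter_upwards [hbox] with y hy using kthLargest_mem_Icc hv hy

theorem integral_kthLargest_succ_lt {ν : Measure ℝ} [IsProbabilityMeasure ν] {v : ℝ} (hv : 0 ≤ v)
    (hν : ∀ᵐ x ∂ν, x ∈ Set.Icc 0 v) {m κ : ℕ} (hκ : 0 < κ) (hκm : κ ≤ m)
    (hmono : Measure.pi (fun _ : Fin (m + 1) => ν) {y | StrictMono y} ≠ 0) :
    ∫ y, kthLargest (m + 1) (κ + 1) y ∂(Measure.pi fun _ => ν)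
      < ∫ y, kthLargest m κ y ∂(Measure.pi fun _ => ν) := by
  have htail := measurePreserving_finTail ν m
  rw [← htail.map_eq, integral_map htail.measurable.aemeasurable
    (measurable_kthLargest m κ).aestronglyMeasurable]
  exact integral_lt_integral_of_le_of_lt_on (integrable_kthLargest_pi hv hν _ _)
    (htail.integrable_comp_of_integrable (integrable_kthLargest_pi hv hν m κ))
    (kthLargest_succ_le_tail hκ hκm) hmono fun y hy => kthLargest_succ_lt_tail hκ hκm hy

theorem truncExpOrderStat_succ_lt {μ : Measure ℝ} [IsFiniteMeasure μ] {v : ℝ} (hv : 0 < v)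
    (hμ : ∀ a b, 0 ≤ a → a < b → b ≤ v → 0 < μ (Set.Ioo a b)) {m κ : ℕ} (hκ : 0 < κ)
    (hκm : κ ≤ m) : truncExpOrderStat μ (m + 1) (κ + 1) v < truncExpOrderStat μ m κ v := by
  have hcond : ∀ a b, 0 ≤ a → a < b → b ≤ v → 0 < μ[Set.Ioo a b | Set.Icc 0 v] :=
    fun a b ha hab hb => cond_pos_of_inter_ne_zero measurableSet_Icc <| by
      rw [Set.inter_eq_right.mpr (Set.Ioo_subset_Icc_self.trans (Set.Icc_subset_Icc ha hb))]
      exact (hμ a b ha hab hb).ne'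
  have : IsProbabilityMeasure μ[|Set.Icc 0 v] := cond_isProbabilityMeasure
    ((hμ 0 v le_rfl hv le_rfl).trans_le (measure_mono Set.Ioo_subset_Icc_self)).ne'
  exact integral_kthLargest_succ_lt hv.le (ae_cond_mem measurableSet_Icc) hκ hκm
    (pi_setOf_strictMono_pos hv hcond _).ne'

theorem sum_Icc_mul_eq_add_sum_gap_mul_tail (d e : ℕ → ℝ) (k : ℕ) :
    ∑ κ ∈ Icc 1 k, d κ * e κ = (∑ κ ∈ Icc 1 k, d κ) * e 1
      + ∑ j ∈ Ico 1 k, (∑ κ ∈ Icc (j + 1) k, d κ) * (e (j + 1) - e j) := by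
  have htelescope : ∀ κ ∈ Icc 1 k, e κ = e 1 + ∑ j ∈ Ico 1 κ, (e (j + 1) - e j) :=
    fun κ hκ => by rw [sum_Ico_sub e (mem_Icc.mp hκ).1]; ring
  have hswap : ∑ κ ∈ Icc 1 k, ∑ j ∈ Ico 1 κ, d κ * (e (j + 1) - e j)
      = ∑ j ∈ Ico 1 k, ∑ κ ∈ Icc (j + 1) k, d κ * (e (j + 1) - e j) :=
    sum_comm' fun κ j => by simp only [mem_Icc, mem_Ico]; omega
  calc ∑ κ ∈ Icc 1 k, d κ * e κ
      = ∑ κ ∈ Icc 1 k, (d κ * e 1 + ∑ j ∈ Ico 1 κ, d κ * (e (j + 1) - e j)) :=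
        sum_congr rfl fun κ hκ => by rw [htelescope κ hκ, mul_add, mul_sum]
    _ = _ := by
        rw [sum_add_distrib, hswap]
        simp only [sum_mul]

theorem sum_mul_lt_sum_mul_of_strictFOSD {k : ℕ} {e w w' : ℕ → ℝ}
    (he : ∀ j ∈ Ico 1 k, e (j + 1) < e j)
    (hsum : ∑ i ∈ Icc 1 k, w' i = ∑ i ∈ Icc 1 k, w i)
    (hFOSD : ∀ j ∈ Icc 1 k, ∑ i ∈ Icc j k, w' i ≤ ∑ i ∈ Icc j k, w i)
    (hstrict : ∃ j ∈ Icc 1 k, ∑ i ∈ Icc j k, w' i < ∑ i ∈ Icc j k, w i) :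
    ∑ κ ∈ Icc 1 k, w κ * e κ < ∑ κ ∈ Icc 1 k, w' κ * e κ := by
  rw [sum_Icc_mul_eq_add_sum_gap_mul_tail w, sum_Icc_mul_eq_add_sum_gap_mul_tail w', hsum]
  refine add_lt_add_right (sum_lt_sum (fun j hj => ?_) ?_) _
  · have hj' := mem_Ico.mp hj
    exact mul_le_mul_of_nonpos_right (hFOSD (j + 1) (mem_Icc.mpr (by omega)))
      (sub_nonpos.mpr (he j hj).le)
  · obtain ⟨j, hj, hlt⟩ := hstrict
    have hj1 : j ≠ 1 := by rintro rfl; exact hlt.ne hsum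
    have hj' := mem_Icc.mp hj
    obtain ⟨i, rfl⟩ : ∃ i, j = i + 1 := ⟨j - 1, by omega⟩
    have hi : i ∈ Ico 1 k := mem_Ico.mpr (by omega)
    exact ⟨i, hi, mul_lt_mul_of_neg_right hlt (sub_neg.mpr (he i hi))⟩

theorem tAE_FOSD_dominance_general
    (vbar : ℝ)
    (n k : ℕ) (hkn : k < n)
    (μ : Measure ℝ) [IsProbabilityMeasure μ]
    (hsupp2 : ∀ a b : ℝ, 0 ≤ a → a < b → b ≤ vbar → 0 < μ (Set.Ioo a b))
    (w w' : ℕ → ℝ)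
    (hwsum : ∑ i ∈ Finset.Icc 1 k, w i = 1)
    (hw'sum : ∑ i ∈ Finset.Icc 1 k, w' i = 1)
    (hFOSD : ∀ j ∈ Finset.Icc 1 k,
      ∑ i ∈ Finset.Icc j k, w' i ≤ ∑ i ∈ Finset.Icc j k, w i)
    (hstrict : ∃ j ∈ Finset.Icc 1 k,
      ∑ i ∈ Finset.Icc j k, w' i < ∑ i ∈ Finset.Icc j k, w i)
    (v : ℝ) (hv : v ∈ Set.Ioc 0 vbar) :
    ∑ κ ∈ Finset.Icc 1 k, w κ * truncExpOrderStat μ (n - k + κ - 1) κ v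
      < ∑ κ ∈ Finset.Icc 1 k, w' κ * truncExpOrderStat μ (n - k + κ - 1) κ v := by
  have hμ : ∀ a b, 0 ≤ a → a < b → b ≤ v → 0 < μ (Set.Ioo a b) :=
    fun a b ha hab hb => hsupp2 a b ha hab (hb.trans hv.2)
  refine sum_mul_lt_sum_mul_of_strictFOSD (fun j hj => ?_) (hw'sum.trans hwsum.symm) hFOSD hstrict
  have hj' := mem_Ico.mp hj
  have hstep := truncExpOrderStat_succ_lt hv.1 hμ (m := n - k + j - 1) (κ := j) (by omega)
    (by omega)
  rwa [show n - k + j - 1 + 1 = n - k + (j + 1) - 1 by omega] at hstep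

/-- **Lemma 3 of the paper (FOSD dominance of expected transfers).**
With `e κ v = E[Y_κ^{(n-k+κ-1)}]` for draws from `μ` truncated to `[0, v]`,
if the belief `w` strictly FOSD dominates `w'`, then
`∑ κ w'(κ) e_κ(v) > ∑ κ w(κ) e_κ(v)`, i.e. `t_AE(v|μ', v) > t_AE(v|μ, v)`. -/
theorem tAE_FOSD_dominance
    (vbar : ℝ) (hvbar : 0 < vbar)
    (n k : ℕ) (hn : 2 ≤ n) (hk1 : 1 ≤ k) (hkn : k < n)
    (μ : Measure ℝ) [IsProbabilityMeasure μ]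
    (hatomless : ∀ x : ℝ, μ {x} = 0)
    (hsupp1 : μ (Set.Icc 0 vbar) = 1)
    (hsupp2 : ∀ a b : ℝ, 0 ≤ a → a < b → b ≤ vbar → 0 < μ (Set.Ioo a b))
    (w w' : ℕ → ℝ)
    (hw0 : ∀ i ∈ Finset.Icc 1 k, 0 ≤ w i)
    (hw'0 : ∀ i ∈ Finset.Icc 1 k, 0 ≤ w' i)
    (hwsum : ∑ i ∈ Finset.Icc 1 k, w i = 1)
    (hw'sum : ∑ i ∈ Finset.Icc 1 k, w' i = 1)
    (hFOSD : ∀ j ∈ Finset.Icc 1 k,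
      ∑ i ∈ Finset.Icc j k, w' i ≤ ∑ i ∈ Finset.Icc j k, w i)
    (hstrict : ∃ j ∈ Finset.Icc 1 k,
      ∑ i ∈ Finset.Icc j k, w' i < ∑ i ∈ Finset.Icc j k, w i)
    (v : ℝ) (hv : v ∈ Set.Ioc 0 vbar) :
    ∑ κ ∈ Finset.Icc 1 k, w κ * truncExpOrderStat μ (n - k + κ - 1) κ v
      < ∑ κ ∈ Finset.Icc 1 k, w' κ * truncExpOrderStat μ (n - k + κ - 1) κ v :=
  tAE_FOSD_dominance_general vbar n k hkn μ hsupp2 w w' hwsum hw'sum hFOSD hstrict v hv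
end

section
/- Define γ(v) := √(144v⁴ − 216v³ + 33v² + 72v + 16), b_NN(v) := (γ(v) − 12v² + 9v − 4)/(36(1 − v)), and b_YN(v) := v(3/2 − 2v)/(3(1 − v)) for v ∈ [0, 1/2]. Then b_NN and b_YN are strictly increasing on [0, 1/2], and b_NN(1/2) = 2/9. -/
noncomputable section

/-- `γ(v) = √(144 v⁴ − 216 v³ + 33 v² + 72 v + 16)` from Example 4. -/
def γ (v : ℝ) : ℝ := Real.sqrt (144 * v ^ 4 - 216 * v ^ 3 + 33 * v ^ 2 + 72 * v + 16)

/-- The "no news" bidding function of Example 4. -/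
def bNN (v : ℝ) : ℝ := (γ v - 12 * v ^ 2 + 9 * v - 4) / (36 * (1 - v))

/-- The "yes news" bidding function of Example 4 (with `v̂ = 1/2`). -/
def bYN (v : ℝ) : ℝ := v * (3 / 2 - 2 * v) / (3 * (1 - v))

lemma r_pos (v : ℝ) : (0:ℝ) < 12 * v ^ 2 - 9 * v + 4 := by
  nlinarith [sq_nonneg (24 * v - 9)]

lemma Q_nonneg (v : ℝ) (hv0 : 0 ≤ v) (hv : v ≤ 1 / 2) :
    0 ≤ 144 * v ^ 4 - 216 * v ^ 3 + 33 * v ^ 2 + 72 * v + 16 := by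
  nlinarith [sq_nonneg (12 * v ^ 2 - 9 * v + 4), mul_nonneg hv0 (by linarith : (0:ℝ) ≤ 1 - v)]

lemma gamma_nonneg (v : ℝ) : 0 ≤ γ v := Real.sqrt_nonneg _

lemma gamma_sq (v : ℝ) (hv0 : 0 ≤ v) (hv : v ≤ 1 / 2) :
    γ v ^ 2 = 144 * v ^ 4 - 216 * v ^ 3 + 33 * v ^ 2 + 72 * v + 16 :=
  Real.sq_sqrt (Q_nonneg v hv0 hv)

lemma bNN_eq (v : ℝ) (hv0 : 0 ≤ v) (hv : v ≤ 1 / 2) :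
    bNN v = 4 * v / (γ v + (12 * v ^ 2 - 9 * v + 4)) := by
  have hr := r_pos v
  have hS : 0 < γ v + (12 * v ^ 2 - 9 * v + 4) := by
    have := gamma_nonneg v; linarith
  have hden : (0:ℝ) < 36 * (1 - v) := by linarith
  have key : (γ v - (12 * v ^ 2 - 9 * v + 4)) * (γ v + (12 * v ^ 2 - 9 * v + 4))
      = 144 * v * (1 - v) := by
    have h := gamma_sq v hv0 hv
    nlinarith [h]
  unfold bNN
  rw [div_eq_div_iff hden.ne' hS.ne']
  nlinarith [key]

/-- **Monotonicity of the post-τ bidding functions** (Example 4):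
`b_NN` and `b_YN` are strictly increasing on `[0, 1/2]` and `b_NN (1/2) = 2/9`. -/
theorem bNN_bYN_strictMono_and_value :
    StrictMonoOn bNN (Set.Icc (0 : ℝ) (1 / 2)) ∧
      StrictMonoOn bYN (Set.Icc (0 : ℝ) (1 / 2)) ∧
      bNN (1 / 2) = 2 / 9 := by
  refine ⟨?_, ?_, ?_⟩
  · intro a ha b hb hab
    obtain ⟨ha0, ha1⟩ := ha
    obtain ⟨hb0, hb1⟩ := hb
    rw [bNN_eq a ha0 ha1, bNN_eq b hb0 hb1]
    set ra : ℝ := 12 * a ^ 2 - 9 * a + 4 with hra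
    set rb : ℝ := 12 * b ^ 2 - 9 * b + 4 with hrb
    have hSa : 0 < γ a + ra := by have := gamma_nonneg a; have := r_pos a; linarith
    have hSb : 0 < γ b + rb := by have := gamma_nonneg b; have := r_pos b; linarith
    rw [div_lt_div_iff₀ hSa hSb]
    -- a * γ b ≤ b * γ a
    have hb0' : 0 < b := lt_of_le_of_lt ha0 hab
    have hcross : a * γ b ≤ b * γ a := by
      have h1 : a * γ b = Real.sqrt (a ^ 2 * (144 * b ^ 4 - 216 * b ^ 3 + 33 * b ^ 2 + 72 * b + 16)) := by
        rw [Real.sqrt_mul (sq_nonneg a), Real.sqrt_sq ha0]; rfl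
      have h2 : b * γ a = Real.sqrt (b ^ 2 * (144 * a ^ 4 - 216 * a ^ 3 + 33 * a ^ 2 + 72 * a + 16)) := by
        rw [Real.sqrt_mul (sq_nonneg b), Real.sqrt_sq hb0'.le]; rfl
      rw [h1, h2]
      apply Real.sqrt_le_sqrt
      have hfac : b ^ 2 * (144 * a ^ 4 - 216 * a ^ 3 + 33 * a ^ 2 + 72 * a + 16)
          - a ^ 2 * (144 * b ^ 4 - 216 * b ^ 3 + 33 * b ^ 2 + 72 * b + 16)
          = (b - a) * (216 * a ^ 2 * b ^ 2 - 144 * a ^ 2 * b ^ 2 * (a + b)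
              + 72 * a * b + 16 * (a + b)) := by ring
      nlinarith [mul_nonneg (mul_nonneg (sq_nonneg a) (sq_nonneg b))
          (by linarith : (0:ℝ) ≤ 1 - (a + b) + 1/2),
        mul_nonneg ha0 hb0'.le, sq_nonneg (a * b),
        mul_nonneg (mul_nonneg (sq_nonneg a) (sq_nonneg b)) (by linarith : (0:ℝ) ≤ 1 - a),
        hab.le]
    -- a * rb < b * ra
    have hrr : a * rb < b * ra := by
      have h1 : b * ra - a * rb = (b - a) * (4 - 12 * a * b) := by rw [hra, hrb]; ring
      have h2 : (0:ℝ) < 4 - 12 * a * b := by nlinarith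
      nlinarith [mul_pos (by linarith : (0:ℝ) < b - a) h2]
    nlinarith [hcross, hrr]
  · intro a ha b hb hab
    obtain ⟨ha0, ha1⟩ := ha
    obtain ⟨hb0, hb1⟩ := hb
    unfold bYN
    have hda : (0:ℝ) < 3 * (1 - a) := by linarith
    have hdb : (0:ℝ) < 3 * (1 - b) := by linarith
    rw [div_lt_div_iff₀ hda hdb]
    nlinarith [mul_nonneg (by linarith : (0:ℝ) ≤ 1 - 2 * b) (by linarith : (0:ℝ) ≤ 1 - a)]
  · have h : γ (1 / 2) = 13 / 2 := by
      unfold γ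
      rw [show (144 * (1/2:ℝ) ^ 4 - 216 * (1/2) ^ 3 + 33 * (1/2) ^ 2 + 72 * (1/2) + 16)
          = (13/2) ^ 2 by norm_num]
      exact Real.sqrt_sq (by norm_num)
    unfold bNN
    rw [h]
    norm_num

end
end

section
/- Define γ(v) := √(144v⁴ − 216v³ + 33v² + 72v + 16), b_NN(v) := (γ(v) − 12v² + 9v − 4)/(36(1 − v)), and b_YN(v) := v(3/2 − 2v)/(3(1 − v)). Then for every v ∈ (0, 1/2], b_NN(v) > b_YN(v). -/
noncomputable section

/-- **Good news relaxes entry times** (Example 4): for every `v ∈ (0, 1/2]`,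
`b_NN v > b_YN v`. -/
theorem bNN_gt_bYN : ∀ v ∈ Set.Ioc (0 : ℝ) (1 / 2), bYN v < bNN v := by
  rintro v ⟨hv0, hv1⟩
  have h1v : (0:ℝ) < 1 - v := by linarith
  have hr : (0:ℝ) < -12 * v ^ 2 + 9 * v + 4 := by nlinarith
  have hγ : -12 * v ^ 2 + 9 * v + 4 < γ v := by
    rw [γ, show (144 * v ^ 4 - 216 * v ^ 3 + 33 * v ^ 2 + 72 * v + 16 : ℝ)
        = (-12 * v ^ 2 + 9 * v + 4) ^ 2 + 48 * v ^ 2 by ring]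
    nlinarith [Real.sq_sqrt (by nlinarith : (0:ℝ) ≤ (-12 * v ^ 2 + 9 * v + 4) ^ 2 + 48 * v ^ 2),
      Real.sqrt_nonneg ((-12 * v ^ 2 + 9 * v + 4) ^ 2 + 48 * v ^ 2)]
  rw [bYN, bNN, div_lt_div_iff₀ (by linarith) (by linarith)]
  nlinarith [mul_pos h1v (sub_pos.mpr hγ)]

end
end

section
/- Define γ(v) := √(144v⁴ − 216v³ + 33v² + 72v + 16). Then for all real v, v′ with 0 ≤ v < v′ ≤ 1/2, ((v − v′)² / (48(v′ − 1))) · ( −2v(−12v′² + γ(v′) + 9v′ − 4) + 48v′³ − 72v′² + (19 − 4γ(v′))v′ + 3(γ(v′) + 4) ) < 0. -/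
noncomputable section

/-- **No profitable upward deviations** (Example 4): for `0 ≤ v < v' ≤ 1/2`, the
upward-deviation payoff difference `π^U(v'; v) − π^U(v; v)` is strictly negative. -/
theorem upward_deviation_neg :
    ∀ v v' : ℝ, 0 ≤ v → v < v' → v' ≤ 1 / 2 →
      ((v - v') ^ 2 / (48 * (v' - 1))) *
          (-2 * v * (-12 * v' ^ 2 + γ v' + 9 * v' - 4) + 48 * v' ^ 3
            - 72 * v' ^ 2 + (19 - 4 * γ v') * v' + 3 * (γ v' + 4)) < 0 := by
  intro v v' hv hlt hle
  have hv'0 : 0 < v' := lt_of_le_of_lt hv hlt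
  have hrad : (0:ℝ) ≤ 144 * v' ^ 4 - 216 * v' ^ 3 + 33 * v' ^ 2 + 72 * v' + 16 := by
    nlinarith [sq_nonneg v', sq_nonneg (v' - 1), sq_nonneg (12 * v'^2 - 9 * v' + 4)]
  have hg0 : 0 ≤ γ v' := Real.sqrt_nonneg _
  have hgsq : γ v' ^ 2 = 144 * v' ^ 4 - 216 * v' ^ 3 + 33 * v' ^ 2 + 72 * v' + 16 :=
    Real.sq_sqrt hrad
  -- γ v' > 12 v'^2 - 9 v' + 4 for 0 < v' ≤ 1/2
  have hkey : 12 * v' ^ 2 - 9 * v' + 4 < γ v' := by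
    nlinarith [sq_nonneg (γ v' - (12 * v' ^ 2 - 9 * v' + 4)), sq_nonneg (γ v' + (12 * v' ^ 2 - 9 * v' + 4)), sq_nonneg (3 * v' - 2), mul_pos hv'0 (by linarith : (0:ℝ) < 1 - v')]
  -- second factor positive
  have hE : 0 < -2 * v * (-12 * v' ^ 2 + γ v' + 9 * v' - 4) + 48 * v' ^ 3
      - 72 * v' ^ 2 + (19 - 4 * γ v') * v' + 3 * (γ v' + 4) := by
    have hcoef : 0 < -12 * v' ^ 2 + γ v' + 9 * v' - 4 := by linarith
    have hmono : -2 * v * (-12 * v' ^ 2 + γ v' + 9 * v' - 4)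
        > -2 * v' * (-12 * v' ^ 2 + γ v' + 9 * v' - 4) := by
      nlinarith
    have hEv' : 0 ≤ -2 * v' * (-12 * v' ^ 2 + γ v' + 9 * v' - 4) + 48 * v' ^ 3
        - 72 * v' ^ 2 + (19 - 4 * γ v') * v' + 3 * (γ v' + 4) := by
      have h1 : -2 * v' * (-12 * v' ^ 2 + γ v' + 9 * v' - 4) + 48 * v' ^ 3
          - 72 * v' ^ 2 + (19 - 4 * γ v') * v' + 3 * (γ v' + 4)
          = 72 * v' ^ 3 - 90 * v' ^ 2 + 27 * v' + 12 + (3 - 6 * v') * γ v' := by ring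
      rw [h1]
      have h2 : 0 ≤ (3 - 6 * v') * γ v' := mul_nonneg (by linarith) hg0
      nlinarith [sq_nonneg (v' - 1/5), hv'0.le]
    linarith
  -- first factor negative
  have hF : (v - v') ^ 2 / (48 * (v' - 1)) < 0 :=
    div_neg_of_pos_of_neg (pow_pos (by simpa using sub_pos.mpr hlt : (0:ℝ) < -(v - v')) 2 |>.trans_eq (by ring)) (by linarith)
  exact mul_neg_of_neg_of_pos hF hE

end
end
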